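/- For any consistent LE-ALC ABox A and any individual names b, y occurring in A: (1) A ⊨ ¬(b I y) iff ¬(b I y) ∈ A; (2) A ⊨ ¬(b R_□ y) iff ¬(b R_□ y) ∈ A; (3) A ⊨ ¬(y R_◇ b) iff ¬(y R_◇ b) ∈ A. -/

import Mathlib

/-!
Common formal infrastructure for the description logic LE-ALC:
syntax of concepts, individual names, ABox terms, the tableaux expansion
rules and completion, and the polarity-based (enriched formal context)
semantics.
-/

namespace LEALC

/-- LE-ALC concepts: `C ::= D | C₁ ∧ C₂ | C₁ ∨ C₂ | [R_□]C | ⟨R_◇⟩C`. -/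
inductive Cpt : Type
  | atom : ℕ → Cpt
  | meet : Cpt → Cpt → Cpt
  | join : Cpt → Cpt → Cpt
  | box  : Cpt → Cpt
  | dia  : Cpt → Cpt
  deriving DecidableEq

/-- Object individual names: ordinary names from `OBJ`, classifying objects
`a_C`, and the prefixed names `◇b`, `◆b` generated by the tableaux. -/
inductive ObName : Type
  | base : ℕ → ObName
  | cls  : Cpt → ObName
  | dia  : ObName → ObName
  | bdia : ObName → ObName
  deriving DecidableEq

/-- Feature individual names: ordinary names from `FEAT`, classifying features
`x_C`, and the prefixed names `□y`, `■y` generated by the tableaux. -/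
inductive FtName : Type
  | base : ℕ → FtName
  | cls  : Cpt → FtName
  | box  : FtName → FtName
  | bbox : FtName → FtName
  deriving DecidableEq

/-- `◇b`, with the identification `◇a_C = a_{◇C}`. -/
def ObName.diaS : ObName → ObName
  | .cls C => .cls (.dia C)
  | b => .dia b

/-- `□y`, with the identification `□x_C = x_{□C}`. -/
def FtName.boxS : FtName → FtName
  | .cls C => .cls (.box C)
  | y => .box y

/-- Positive (unnegated) ABox terms:
`a I x`, `a R_□ x`, `x R_◇ a`, `a : C`, `x :: C`. -/
inductive PTerm : Type
  | rI   : ObName → FtName → PTerm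
  | rbox : ObName → FtName → PTerm
  | rdia : FtName → ObName → PTerm
  | mem  : ObName → Cpt → PTerm
  | fmem : FtName → Cpt → PTerm
  deriving DecidableEq

/-- ABox terms: a positive term or its negation. -/
inductive Term : Type
  | pos : PTerm → Term
  | neg : PTerm → Term
  deriving DecidableEq

/-- The relational terms are `a I x`, `a R_□ x` and `x R_◇ a`. -/
def PTerm.IsRelational : PTerm → Prop
  | .rI _ _ => True
  | .rbox _ _ => True
  | .rdia _ _ => True
  | .mem _ _ => False
  | .fmem _ _ => False

/-- Subformulas (subconcepts) of a concept. -/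
def Cpt.subs : Cpt → Finset Cpt
  | .atom n => {Cpt.atom n}
  | .meet C₁ C₂ => insert (Cpt.meet C₁ C₂) (C₁.subs ∪ C₂.subs)
  | .join C₁ C₂ => insert (Cpt.join C₁ C₂) (C₁.subs ∪ C₂.subs)
  | .box C => insert (Cpt.box C) C.subs
  | .dia C => insert (Cpt.dia C) C.subs

/-- The concepts occurring in a term (subformulas of the concept of a
(possibly negated) membership assertion). -/
def Term.cpts : Term → Finset Cpt
  | .pos (.mem _ C) => C.subs
  | .pos (.fmem _ C) => C.subs
  | .neg (.mem _ C) => C.subs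
  | .neg (.fmem _ C) => C.subs
  | _ => ∅

/-- The concept `C` occurs in the set of terms `A`. -/
def Occurs (C : Cpt) (A : Set Term) : Prop := ∃ t ∈ A, C ∈ t.cpts

def PTerm.objs : PTerm → List ObName
  | .rI b _ => [b]
  | .rbox b _ => [b]
  | .rdia _ b => [b]
  | .mem b _ => [b]
  | .fmem _ _ => []

def PTerm.feats : PTerm → List FtName
  | .rI _ y => [y]
  | .rbox _ y => [y]
  | .rdia y _ => [y]
  | .mem _ _ => []
  | .fmem y _ => [y]

def Term.objs : Term → List ObName
  | .pos t => t.objs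
  | .neg t => t.objs

def Term.feats : Term → List FtName
  | .pos t => t.feats
  | .neg t => t.feats

/-- The object name `b` occurs in the set of terms `S`. -/
def ObOccurs (b : ObName) (S : Set Term) : Prop := ∃ t ∈ S, b ∈ t.objs

/-- The feature name `y` occurs in the set of terms `S`. -/
def FtOccurs (y : FtName) (S : Set Term) : Prop := ∃ t ∈ S, y ∈ t.feats

def ObName.IsBase (b : ObName) : Prop := ∃ n, b = ObName.base n
def FtName.IsBase (y : FtName) : Prop := ∃ n, y = FtName.base n

/-- A term all of whose individual names are ordinary (non-generated) names. -/
def Term.Plain (t : Term) : Prop :=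
  (∀ b ∈ t.objs, b.IsBase) ∧ (∀ y ∈ t.feats, y.IsBase)

/-- An ABox is a set of terms over the ordinary individual names `OBJ`/`FEAT`
(the generated names `a_C`, `x_C`, `◇b`, `◆b`, `□y`, `■y` are fresh). -/
def ABoxWF (A : Set Term) : Prop := ∀ t ∈ A, t.Plain

def Cpt.csize : Cpt → ℕ
  | .atom _ => 1
  | .meet C₁ C₂ => C₁.csize + C₂.csize + 1
  | .join C₁ C₂ => C₁.csize + C₂.csize + 1
  | .box C => C.csize + 1
  | .dia C => C.csize + 1

def PTerm.psize : PTerm → ℕ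
  | .rI _ _ => 1
  | .rbox _ _ => 1
  | .rdia _ _ => 1
  | .mem _ C => C.csize + 1
  | .fmem _ C => C.csize + 1

def Term.tsize : Term → ℕ
  | .pos t => t.psize + 1
  | .neg t => t.psize + 2

/-- The size `|A|` of an ABox. -/
def aboxSize (A : Finset Term) : ℕ := A.sum Term.tsize

/-- Box-depth of a concept. -/
def Cpt.bd : Cpt → ℕ
  | .atom _ => 0
  | .meet C₁ C₂ => max C₁.bd C₂.bd
  | .join C₁ C₂ => max C₁.bd C₂.bd
  | .box C => C.bd + 1
  | .dia C => C.bd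

/-- Diamond-depth of a concept. -/
def Cpt.dd : Cpt → ℕ
  | .atom _ => 0
  | .meet C₁ C₂ => max C₁.dd C₂.dd
  | .join C₁ C₂ => max C₁.dd C₂.dd
  | .box C => C.dd
  | .dia C => C.dd + 1

/-- Box-depth of an object name (names in the input ABox have depth 0,
prefixing changes the depth, classifying names inherit depths from their
concept). -/
def ObName.bd : ObName → ℤ
  | .base _ => 0
  | .cls C => -(C.bd : ℤ)
  | .dia b => b.bd
  | .bdia b => b.bd + 1

/-- Diamond-depth of an object name. -/
def ObName.dd : ObName → ℤ
  | .base _ => 0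
  | .cls C => -(C.dd : ℤ)
  | .dia b => b.dd + 1
  | .bdia b => b.dd

/-- Box-depth of a feature name. -/
def FtName.bd : FtName → ℤ
  | .base _ => 0
  | .cls C => -(C.bd : ℤ)
  | .box y => y.bd + 1
  | .bbox y => y.bd

/-- Diamond-depth of a feature name. -/
def FtName.dd : FtName → ℤ
  | .base _ => 0
  | .cls C => -(C.dd : ℤ)
  | .box y => y.dd
  | .bbox y => y.dd + 1

/-- All concepts occurring in an ABox. -/
def aboxCpts (A : Finset Term) : Finset Cpt := A.biUnion Term.cpts

/-- `□_D(A)`: maximal box-depth of a concept occurring in `A`. -/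
def aboxBd (A : Finset Term) : ℕ := (aboxCpts A).sup Cpt.bd

/-- `◇_D(A)`: maximal diamond-depth of a concept occurring in `A`. -/
def aboxDd (A : Finset Term) : ℕ := (aboxCpts A).sup Cpt.dd

/-- One-step derivability: `Deriv E A S t` holds iff the term `t` can be
added by applying one of the LE-ALC tableaux expansion rules (or the extra
rule `E`) to the current set of terms `S`, `A` being the input ABox (used
for the side conditions of the creation and inverse rules). -/
inductive Deriv (E : Term → Term → Prop) (A S : Set Term) : Term → Prop
  /-- creation rule -/
  | create_a {C : Cpt} : Occurs C A → Deriv E A S (.pos (.mem (.cls C) C))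
  | create_x {C : Cpt} : Occurs C A → Deriv E A S (.pos (.fmem (.cls C) C))
  /-- basic rule -/
  | basic {b y C} : Term.pos (.mem b C) ∈ S → Term.pos (.fmem y C) ∈ S →
      Deriv E A S (.pos (.rI b y))
  /-- rules for the logical connectives -/
  | andA_l {b C₁ C₂} : Term.pos (.mem b (.meet C₁ C₂)) ∈ S → Deriv E A S (.pos (.mem b C₁))
  | andA_r {b C₁ C₂} : Term.pos (.mem b (.meet C₁ C₂)) ∈ S → Deriv E A S (.pos (.mem b C₂))
  | orX_l {y C₁ C₂} : Term.pos (.fmem y (.join C₁ C₂)) ∈ S → Deriv E A S (.pos (.fmem y C₁))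
  | orX_r {y C₁ C₂} : Term.pos (.fmem y (.join C₁ C₂)) ∈ S → Deriv E A S (.pos (.fmem y C₂))
  | boxR {b y C} : Term.pos (.mem b (.box C)) ∈ S → Term.pos (.fmem y C) ∈ S →
      Deriv E A S (.pos (.rbox b y))
  | diaR {b y C} : Term.pos (.fmem y (.dia C)) ∈ S → Term.pos (.mem b C) ∈ S →
      Deriv E A S (.pos (.rdia y b))
  /-- inverse rules for the connectives -/
  | andA_inv {b C₁ C₂} : Term.pos (.mem b C₁) ∈ S → Term.pos (.mem b C₂) ∈ S →
      Occurs (.meet C₁ C₂) A → Deriv E A S (.pos (.mem b (.meet C₁ C₂)))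
  | orX_inv {y C₁ C₂} : Term.pos (.fmem y C₁) ∈ S → Term.pos (.fmem y C₂) ∈ S →
      Occurs (.join C₁ C₂) A → Deriv E A S (.pos (.fmem y (.join C₁ C₂)))
  /-- adjunction rules -/
  | adj_box_l {b y} : Term.pos (.rbox b y) ∈ S → Deriv E A S (.pos (.rI (.bdia b) y))
  | adj_box_r {b y} : Term.pos (.rbox b y) ∈ S → Deriv E A S (.pos (.rI b (FtName.boxS y)))
  | adj_dia_l {b y} : Term.pos (.rdia y b) ∈ S → Deriv E A S (.pos (.rI (ObName.diaS b) y))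
  | adj_dia_r {b y} : Term.pos (.rdia y b) ∈ S → Deriv E A S (.pos (.rI b (.bbox y)))
  /-- I-compatibility rules -/
  | icomp_box {b y} : Term.pos (.rI b (FtName.boxS y)) ∈ S → Deriv E A S (.pos (.rbox b y))
  | icomp_bbox {b y} : Term.pos (.rI b (.bbox y)) ∈ S → Deriv E A S (.pos (.rdia y b))
  | icomp_dia {b y} : Term.pos (.rI (ObName.diaS b) y) ∈ S → Deriv E A S (.pos (.rdia y b))
  | icomp_bdia {b y} : Term.pos (.rI (.bdia b) y) ∈ S → Deriv E A S (.pos (.rbox b y))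
  /-- basic rules for negative assertions -/
  | neg_b {b C} : Term.neg (.mem b C) ∈ S → Deriv E A S (.neg (.rI b (.cls C)))
  | neg_x {y C} : Term.neg (.fmem y C) ∈ S → Deriv E A S (.neg (.rI (.cls C) y))
  /-- appending rules -/
  | app_x {b C} : Term.pos (.rI b (.cls C)) ∈ S → Deriv E A S (.pos (.mem b C))
  | app_a {y C} : Term.pos (.rI (.cls C) y) ∈ S → Deriv E A S (.pos (.fmem y C))
  /-- an additional expansion rule `E` -/
  | extra {t t'} : E t t' → t ∈ S → Deriv E A S t'

/-- `S` contains `A` and is closed under the expansion rules. -/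
def RuleClosed (E : Term → Term → Prop) (A S : Set Term) : Prop :=
  A ⊆ S ∧ ∀ t, Deriv E A S t → t ∈ S

/-- The tableaux completion `Ā` of the ABox `A` (w.r.t. the LE-ALC expansion
rules together with the extra rule `E`): the least set of terms containing
`A` and closed under the rules. -/
def Compl (E : Term → Term → Prop) (A : Set Term) : Set Term :=
  {t | ∀ S : Set Term, RuleClosed E A S → t ∈ S}

/-- No extra expansion rule: the plain LE-ALC tableaux algorithm. -/
def noExt : Term → Term → Prop := fun _ _ => False

/-- One expansion step of the tableaux algorithm: a rule is applied to the
current set `B` and adds a new term. -/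
def Step (E : Term → Term → Prop) (A B B' : Set Term) : Prop :=
  ∃ t, Deriv E A B t ∧ t ∉ B ∧ B' = insert t B

/-- A clash: some relational term occurs together with its negation. -/
def HasClash (S : Set Term) : Prop :=
  ∃ β : PTerm, β.IsRelational ∧ Term.pos β ∈ S ∧ Term.neg β ∈ S

/-- The separation rule `SA(b,d)`: from `b I x` infer `d I x`. -/
def ruleSA (b d : ObName) : Term → Term → Prop :=
  fun t t' => ∃ x : FtName, t = Term.pos (.rI b x) ∧ t' = Term.pos (.rI d x)

/-- The separation rule `SX(y,z)`: from `a I y` infer `a I z`. -/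
def ruleSX (y z : FtName) : Term → Term → Prop :=
  fun t t' => ∃ a : ObName, t = Term.pos (.rI a y) ∧ t' = Term.pos (.rI a z)

/-- The rule `SA(R_□,R_◇,b)`: from `b R_□ y` infer `y R_◇ b`. -/
def ruleSAR (b : ObName) : Term → Term → Prop :=
  fun t t' => ∃ x : FtName, t = Term.pos (.rbox b x) ∧ t' = Term.pos (.rdia x b)

/-- The rule `SX(R_◇,R_□,y)`: from `y R_◇ a` infer `a R_□ y`. -/
def ruleSXR (y : FtName) : Term → Term → Prop :=
  fun t t' => ∃ a : ObName, t = Term.pos (.rdia y a) ∧ t' = Term.pos (.rbox a y)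

/-! ## Semantics: enriched formal contexts -/

/-- `I^{(1)}[B]` -/
def gup {O F : Type} (I : O → F → Prop) (B : Set O) : Set F := {x | ∀ a ∈ B, I a x}

/-- `I^{(0)}[Y]` -/
def gdn {O F : Type} (I : O → F → Prop) (Y : Set F) : Set O := {a | ∀ x ∈ Y, I a x}

/-- Galois-stability for sets of objects. -/
def StableO {O F : Type} (I : O → F → Prop) (B : Set O) : Prop := gdn I (gup I B) = B

/-- Galois-stability for sets of features. -/
def StableF {O F : Type} (I : O → F → Prop) (Y : Set F) : Prop := gup I (gdn I Y) = Y

/-- An interpretation of LE-ALC: an enriched formal context `(Ob, Ft, I, R_□, R_◇)`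
together with interpretations of the individual names and of the atomic
concepts (an atomic concept is interpreted by the formal concept whose
extent is `vA n` and whose intent is `gup I (vA n)`). -/
structure Model where
  Ob : Type
  Ft : Type
  I : Ob → Ft → Prop
  Rb : Ob → Ft → Prop
  Rd : Ft → Ob → Prop
  oi : ObName → Ob
  fi : FtName → Ft
  vA : ℕ → Set Ob

/-- Intent of the interpretation of an atomic concept. -/
def Model.vX (M : Model) (n : ℕ) : Set M.Ft := gup M.I (M.vA n)

/-- Well-formedness of an interpretation: `R_□` and `R_◇` are `I`-compatible,
and atomic concepts are interpreted by formal concepts. -/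
def Model.Good (M : Model) : Prop :=
  (∀ x, StableO M.I {a | M.Rb a x}) ∧
  (∀ a, StableF M.I {x | M.Rb a x}) ∧
  (∀ a, StableF M.I {x | M.Rd x a}) ∧
  (∀ x, StableO M.I {a | M.Rd x a}) ∧
  (∀ n, StableO M.I (M.vA n))

/-- The interpretation `C^M = (extent, intent)` of a concept. -/
def Model.ci (M : Model) : Cpt → Set M.Ob × Set M.Ft
  | .atom n => (M.vA n, M.vX n)
  | .meet C₁ C₂ =>
      ((Model.ci M C₁).1 ∩ (Model.ci M C₂).1,
        gup M.I ((Model.ci M C₁).1 ∩ (Model.ci M C₂).1))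
  | .join C₁ C₂ =>
      (gdn M.I ((Model.ci M C₁).2 ∩ (Model.ci M C₂).2),
        (Model.ci M C₁).2 ∩ (Model.ci M C₂).2)
  | .box C =>
      (gdn M.Rb (Model.ci M C).2, gup M.I (gdn M.Rb (Model.ci M C).2))
  | .dia C =>
      (gdn M.I (gup (fun a x => M.Rd x a) (Model.ci M C).1),
        gup (fun a x => M.Rd x a) (Model.ci M C).1)

/-- Satisfaction of positive ABox terms. -/
def Model.SatP (M : Model) : PTerm → Prop
  | .rI b y => M.I (M.oi b) (M.fi y)
  | .rbox b y => M.Rb (M.oi b) (M.fi y)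
  | .rdia y b => M.Rd (M.fi y) (M.oi b)
  | .mem b C => M.oi b ∈ (Model.ci M C).1
  | .fmem y C => M.fi y ∈ (Model.ci M C).2

/-- Satisfaction of ABox terms. -/
def Model.Sat (M : Model) : Term → Prop
  | .pos t => M.SatP t
  | .neg t => ¬ M.SatP t

/-- `M` is a model of the set of terms `A`. -/
def Model.SatAll (M : Model) (A : Set Term) : Prop := ∀ t ∈ A, M.Sat t

/-- An ABox is consistent iff it has a model. -/
def Consistent (A : Set Term) : Prop := ∃ M : Model, M.Good ∧ M.SatAll A

/-- `A ⊨ t`: every model of `A` satisfies `t`. -/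
def Entails (A : Set Term) (t : Term) : Prop :=
  ∀ M : Model, M.Good → M.SatAll A → M.Sat t

/-- `A ⊨ C₁ ⊑ C₂`: in every model of `A`, `C₁^M ≤ C₂^M` in the concept lattice. -/
def EntailsSub (A : Set Term) (C₁ C₂ : Cpt) : Prop :=
  ∀ M : Model, M.Good → M.SatAll A → (Model.ci M C₁).1 ⊆ (Model.ci M C₂).1

/-! ### Semantic concept operations -/

/-- The operation `[R_□]` on (extent, intent) pairs. -/
def Model.cbox (M : Model) (c : Set M.Ob × Set M.Ft) : Set M.Ob × Set M.Ft :=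
  (gdn M.Rb c.2, gup M.I (gdn M.Rb c.2))

/-- The operation `⟨R_◇⟩` on (extent, intent) pairs. -/
def Model.cdia (M : Model) (c : Set M.Ob × Set M.Ft) : Set M.Ob × Set M.Ft :=
  (gdn M.I (gup (fun a x => M.Rd x a) c.1), gup (fun a x => M.Rd x a) c.1)

/-- The operation `◆` (left adjoint of `[R_□]`). -/
def Model.cbdia (M : Model) (c : Set M.Ob × Set M.Ft) : Set M.Ob × Set M.Ft :=
  (gdn M.I (gup M.Rb c.1), gup M.Rb c.1)

/-- The operation `■` (right adjoint of `⟨R_◇⟩`). -/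
def Model.cbbox (M : Model) (c : Set M.Ob × Set M.Ft) : Set M.Ob × Set M.Ft :=
  (gdn (fun a x => M.Rd x a) c.2, gup M.I (gdn (fun a x => M.Rd x a) c.2))

/-- The concept `𝐚 = (a^{↑↓}, a^{↑})` generated by an object. -/
def Model.genO (M : Model) (a : M.Ob) : Set M.Ob × Set M.Ft :=
  (gdn M.I (gup M.I {a}), gup M.I {a})

/-- The concept `𝐱 = (x^{↓}, x^{↓↑})` generated by a feature. -/
def Model.genF (M : Model) (x : M.Ft) : Set M.Ob × Set M.Ft :=
  (gdn M.I {x}, gup M.I (gdn M.I {x}))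

/-- The concept companion `con(b)` of an object name, interpreted in `M`. -/
def Model.conO (M : Model) : ObName → Set M.Ob × Set M.Ft
  | .base n => M.genO (M.oi (.base n))
  | .cls C => M.genO (M.oi (.cls C))
  | .dia b => M.cdia (Model.conO M b)
  | .bdia b => M.cbdia (Model.conO M b)

/-- The concept companion `con(y)` of a feature name, interpreted in `M`. -/
def Model.conF (M : Model) : FtName → Set M.Ob × Set M.Ft
  | .base n => M.genF (M.fi (.base n))
  | .cls C => M.genF (M.fi (.cls C))
  | .box y => M.cbox (Model.conF M y)
  | .bbox y => M.cbbox (Model.conF M y)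

/-! ### The canonical model built from the tableaux completion -/

/-- Classical `dite`. -/
noncomputable def cdite {α : Sort*} (p : Prop) (f : p → α) (g : ¬ p → α) : α :=
  @dite α p (Classical.dec p) f g

/-- The canonical model built from the tableaux completion `Ā` of `A`:
its objects (resp. features) are the object (resp. feature) names occurring
in `Ā` (plus a dummy point interpreting the names not occurring in `Ā`),
every name occurring in `Ā` is interpreted by itself, the relations are read
off from `Ā`, and an atomic concept `D` is interpreted by the formal concept
`(x_D^↓, a_D^↑)`. -/
noncomputable def canModel (A : Finset Term) : Model where
  Ob := Option {b : ObName // ObOccurs b (Compl noExt ↑A)}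
  Ft := Option {y : FtName // FtOccurs y (Compl noExt ↑A)}
  I := fun o x => ∃ b y, o = some b ∧ x = some y ∧
        Term.pos (.rI b.1 y.1) ∈ Compl noExt ↑A
  Rb := fun o x => ∃ b y, o = some b ∧ x = some y ∧
        Term.pos (.rbox b.1 y.1) ∈ Compl noExt ↑A
  Rd := fun x o => ∃ b y, o = some b ∧ x = some y ∧
        Term.pos (.rdia y.1 b.1) ∈ Compl noExt ↑A
  oi := fun b => cdite (ObOccurs b (Compl noExt ↑A)) (fun h => some ⟨b, h⟩) (fun _ => none)
  fi := fun y => cdite (FtOccurs y (Compl noExt ↑A)) (fun h => some ⟨y, h⟩) (fun _ => none)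
  vA := fun n => {o | ∃ b, o = some b ∧
        Term.pos (.rI b.1 (.cls (.atom n))) ∈ Compl noExt ↑A}

/-! ### ◇-leading and □-leading concepts -/

/-- ◇-leading concepts. -/
inductive DiaLeading : Cpt → Prop
  | atom (n : ℕ) : DiaLeading (.dia (.atom n))
  | dia {C : Cpt} : DiaLeading C → DiaLeading (.dia C)
  | join {C : Cpt} (C₁ : Cpt) : DiaLeading C → DiaLeading (.join C C₁)
  | meet {C₁ C₂ : Cpt} : DiaLeading C₁ → DiaLeading C₂ → DiaLeading (.meet C₁ C₂)

/-- □-leading concepts. -/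
inductive BoxLeading : Cpt → Prop
  | atom (n : ℕ) : BoxLeading (.box (.atom n))
  | box {C : Cpt} : BoxLeading C → BoxLeading (.box C)
  | meet {C : Cpt} (C₁ : Cpt) : BoxLeading C → BoxLeading (.meet C C₁)
  | join {C₁ C₂ : Cpt} : BoxLeading C₁ → BoxLeading C₂ → BoxLeading (.join C₁ C₂)


/-!
The direction `¬β ∈ A → A ⊨ ¬β` is trivial. Conversely let `β` be one of the relational terms and
suppose `¬β ∉ A`. Since the names of `A` are ordinary, adding `β` to `A` adds to the tableaux
completion only `β` and its adjunction partners (`◆b I y`, `b I □y` for `β = b R_□ y`, and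
dually for `R_◇`): relational terms only trigger one-premise rules. None of these new terms
clashes with a negated term of `A` (the partners contain generated names), and the old
completion does not either, because the expansion rules are sound when names are read as their
concept companions and `A` has a model. So the canonical model built from the completion of
`A ∪ {β}` is a model of `A` in which `β` holds, and `A ⊭ ¬β`.
-/

open Order

section Polarity

variable {O F : Type} {I R : O → F → Prop}

theorem stableO_iff_isExtent {S : Set O} : StableO I S ↔ IsExtent I S := isExtent_iff.symm

theorem stableF_iff_isIntent {Y : Set F} : StableF I Y ↔ IsIntent I Y := isIntent_iff.symm

theorem isExtent_setOf_rel (x : F) : IsExtent I {a | I a x} :=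
  ⟨{x}, by ext; simp [lowerPolar]⟩

theorem isIntent_setOf_rel (a : O) : IsIntent I {x | I a x} :=
  ⟨{a}, by ext; simp [upperPolar]⟩

theorem isExtent_of_forall_iff {P : O → Prop} {x : F} (h : ∀ a, P a ↔ I a x) :
    IsExtent I {a | P a} := by
  simpa only [h] using isExtent_setOf_rel x

theorem isIntent_of_forall_iff {P : F → Prop} {a : O} (h : ∀ x, P x ↔ I a x) :
    IsIntent I {x | P x} := by
  simpa only [h] using isIntent_setOf_rel a

theorem isExtent_gdn (hcol : ∀ x, IsExtent I {a | R a x}) (Y : Set F) :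
    IsExtent I (gdn R Y) := by
  convert IsExtent.iInter₂ (fun x (_ : x ∈ Y) => {a | R a x}) fun x _ => hcol x
  ext; simp [gdn]

theorem isIntent_gup (hrow : ∀ a, IsIntent I {x | R a x}) (S : Set O) :
    IsIntent I (gup R S) := by
  convert IsIntent.iInter₂ (fun a (_ : a ∈ S) => {x | R a x}) fun a _ => hrow a
  ext; simp [gup]

theorem forall_mem_closure_iff (hcol : ∀ x, IsExtent I {a | R a x})
    (hrow : ∀ a, IsIntent I {x | R a x}) {a₀ : O} {x₀ : F} :
    (∀ a ∈ gdn I (gup I {a₀}), ∀ x ∈ gup I (gdn I {x₀}), R a x) ↔ R a₀ x₀ := by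
  refine ⟨fun h => h a₀ (subset_lowerPolar_upperPolar I _ rfl) x₀
    (subset_upperPolar_lowerPolar I _ rfl), fun h a ha x hx => ?_⟩
  have hax₀ : R a x₀ :=
    (hcol x₀).lowerPolar_upperPolar_subset (Set.singleton_subset_iff.2 h) ha
  exact (hrow a).upperPolar_lowerPolar_subset (Set.singleton_subset_iff.2 hax₀) hx

end Polarity

namespace Model

variable {M : Model}

theorem Good.isExtent_Rb (hg : M.Good) (x : M.Ft) : IsExtent M.I {a | M.Rb a x} :=
  stableO_iff_isExtent.1 (hg.1 x)

theorem Good.isIntent_Rb (hg : M.Good) (a : M.Ob) : IsIntent M.I {x | M.Rb a x} :=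
  stableF_iff_isIntent.1 (hg.2.1 a)

theorem Good.isIntent_Rd (hg : M.Good) (a : M.Ob) : IsIntent M.I {x | M.Rd x a} :=
  stableF_iff_isIntent.1 (hg.2.2.1 a)

theorem Good.isExtent_Rd (hg : M.Good) (x : M.Ft) : IsExtent M.I {a | M.Rd x a} :=
  stableO_iff_isExtent.1 (hg.2.2.2.1 x)

theorem Good.ci_polar (hg : M.Good) (C : Cpt) :
    (M.ci C).2 = gup M.I (M.ci C).1 ∧ (M.ci C).1 = gdn M.I (M.ci C).2 := by
  induction C with
  | atom n => exact ⟨rfl, (hg.2.2.2.2 n).symm⟩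
  | meet C₁ C₂ ih₁ ih₂ =>
    have h₁ : IsExtent M.I (M.ci C₁).1 := ih₁.2 ▸ isExtent_lowerPolar
    have h₂ : IsExtent M.I (M.ci C₂).1 := ih₂.2 ▸ isExtent_lowerPolar
    exact ⟨rfl, (h₁.inter h₂).eq.symm⟩
  | join C₁ C₂ ih₁ ih₂ =>
    have h₁ : IsIntent M.I (M.ci C₁).2 := ih₁.1 ▸ isIntent_upperPolar
    have h₂ : IsIntent M.I (M.ci C₂).2 := ih₂.1 ▸ isIntent_upperPolar
    exact ⟨(h₁.inter h₂).eq.symm, rfl⟩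
  | box C => exact ⟨rfl, (isExtent_gdn hg.isExtent_Rb _).eq.symm⟩
  | dia C => exact ⟨(isIntent_gup (R := fun a x => M.Rd x a) hg.isIntent_Rd _).eq.symm, rfl⟩

theorem Good.isExtent_ci (hg : M.Good) (C : Cpt) : IsExtent M.I (M.ci C).1 :=
  (hg.ci_polar C).2 ▸ isExtent_lowerPolar

theorem Good.isIntent_ci (hg : M.Good) (C : Cpt) : IsIntent M.I (M.ci C).2 :=
  (hg.ci_polar C).1 ▸ isIntent_upperPolar

/-- The extent of the concept companion `con(b)` (as in `Model.conO`), except that a classifying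
name `a_C` is read as the concept `C` itself. -/
def nameExt (M : Model) : ObName → Set M.Ob
  | .base n => gdn M.I (gup M.I {M.oi (.base n)})
  | .cls C => (M.ci C).1
  | .dia b => gdn M.I (gup (fun a x => M.Rd x a) (M.nameExt b))
  | .bdia b => gdn M.I (gup M.Rb (M.nameExt b))

/-- The intent of the concept companion `con(y)` (as in `Model.conF`), except that a classifying
name `x_C` is read as the concept `C` itself. -/
def nameInt (M : Model) : FtName → Set M.Ft
  | .base n => gup M.I (gdn M.I {M.fi (.base n)})
  | .cls C => (M.ci C).2
  | .box y => gup M.I (gdn M.Rb (M.nameInt y))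
  | .bbox y => gup M.I (gdn (fun a x => M.Rd x a) (M.nameInt y))

/-- Unlike `SatP`, this reading of names by their concept companions makes every expansion rule
sound, also for the generated names. -/
def SatUniform (M : Model) : PTerm → Prop
  | .rI b y => ∀ a ∈ M.nameExt b, ∀ x ∈ M.nameInt y, M.I a x
  | .rbox b y => ∀ a ∈ M.nameExt b, ∀ x ∈ M.nameInt y, M.Rb a x
  | .rdia y b => ∀ a ∈ M.nameExt b, ∀ x ∈ M.nameInt y, M.Rd x a
  | .mem b C => M.nameExt b ⊆ (M.ci C).1
  | .fmem y C => M.nameInt y ⊆ (M.ci C).2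

theorem nameExt_diaS (b : ObName) :
    M.nameExt b.diaS = gdn M.I (gup (fun a x => M.Rd x a) (M.nameExt b)) := by
  cases b <;> rfl

theorem nameInt_boxS (y : FtName) :
    M.nameInt y.boxS = gup M.I (gdn M.Rb (M.nameInt y)) := by
  cases y <;> rfl

theorem Good.satUniform_iff_satP (hg : M.Good) {p : PTerm} (hp : (Term.pos p).Plain) :
    M.SatUniform p ↔ M.SatP p := by
  cases p with
  | rI b y =>
    obtain ⟨n, rfl⟩ := hp.1 b (by simp [Term.objs, PTerm.objs])
    obtain ⟨m, rfl⟩ := hp.2 y (by simp [Term.feats, PTerm.feats])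
    exact forall_mem_closure_iff isExtent_setOf_rel isIntent_setOf_rel
  | rbox b y =>
    obtain ⟨n, rfl⟩ := hp.1 b (by simp [Term.objs, PTerm.objs])
    obtain ⟨m, rfl⟩ := hp.2 y (by simp [Term.feats, PTerm.feats])
    exact forall_mem_closure_iff hg.isExtent_Rb hg.isIntent_Rb
  | rdia y b =>
    obtain ⟨n, rfl⟩ := hp.1 b (by simp [Term.objs, PTerm.objs])
    obtain ⟨m, rfl⟩ := hp.2 y (by simp [Term.feats, PTerm.feats])
    exact forall_mem_closure_iff (R := fun a x => M.Rd x a) hg.isExtent_Rd hg.isIntent_Rd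
  | mem b C =>
    obtain ⟨n, rfl⟩ := hp.1 b (by simp [Term.objs, PTerm.objs])
    exact ⟨fun h => h (subset_lowerPolar_upperPolar M.I _ rfl), fun h =>
      (hg.isExtent_ci C).lowerPolar_upperPolar_subset (Set.singleton_subset_iff.2 h)⟩
  | fmem y C =>
    obtain ⟨m, rfl⟩ := hp.2 y (by simp [Term.feats, PTerm.feats])
    exact ⟨fun h => h (subset_upperPolar_lowerPolar M.I _ rfl), fun h =>
      (hg.isIntent_ci C).upperPolar_lowerPolar_subset (Set.singleton_subset_iff.2 h)⟩

section Adjunction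

variable {b : ObName} {y : FtName}

theorem Good.satUniform_rbox_iff_rI_boxS (hg : M.Good) :
    M.SatUniform (.rbox b y) ↔ M.SatUniform (.rI b y.boxS) := by
  refine ⟨fun h a ha x hx => ?_, fun h a ha => ?_⟩
  · rw [nameInt_boxS] at hx
    exact hx a fun x' hx' => h a ha x' hx'
  · show a ∈ gdn M.Rb (M.nameInt y)
    rw [← (isExtent_gdn hg.isExtent_Rb _).eq]
    exact fun x hx => h a ha x (by rw [nameInt_boxS]; exact hx)

theorem Good.satUniform_rbox_iff_rI_bdia (hg : M.Good) :
    M.SatUniform (.rbox b y) ↔ M.SatUniform (.rI b.bdia y) := by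
  refine ⟨fun h a ha x hx => ha x fun a' ha' => h a' ha' x hx, fun h a ha x hx => ?_⟩
  have hx' : x ∈ gup M.Rb (M.nameExt b) := by
    rw [← (isIntent_gup hg.isIntent_Rb _).eq]
    exact fun a ha => h a ha x hx
  exact hx' a ha

theorem Good.satUniform_rdia_iff_rI_diaS (hg : M.Good) :
    M.SatUniform (.rdia y b) ↔ M.SatUniform (.rI b.diaS y) := by
  refine ⟨fun h a ha x hx => ?_, fun h a ha x hx => ?_⟩
  · rw [nameExt_diaS] at ha
    exact ha x fun a' ha' => h a' ha' x hx
  · have hx' : x ∈ gup (fun a x => M.Rd x a) (M.nameExt b) := by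
      rw [← (isIntent_gup (R := fun a x => M.Rd x a) hg.isIntent_Rd _).eq]
      exact fun a ha => h a (by rw [nameExt_diaS]; exact ha) x hx
    exact hx' a ha

theorem Good.satUniform_rdia_iff_rI_bbox (hg : M.Good) :
    M.SatUniform (.rdia y b) ↔ M.SatUniform (.rI b y.bbox) := by
  refine ⟨fun h a ha x hx => hx a fun x' hx' => h a ha x' hx', fun h a ha => ?_⟩
  show a ∈ gdn (fun a x => M.Rd x a) (M.nameInt y)
  rw [← (isExtent_gdn (R := fun a x => M.Rd x a) hg.isExtent_Rd _).eq]
  exact fun x hx => h a ha x hx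

end Adjunction

theorem Good.satUniform_of_deriv (hg : M.Good) {A S : Set Term}
    (hS : ∀ p, Term.pos p ∈ S → M.SatUniform p) {p : PTerm}
    (d : Deriv noExt A S (.pos p)) : M.SatUniform p := by
  cases d with
  | create_a _ | create_x _ => exact subset_rfl
  | @basic b y C h₁ h₂ =>
    intro a ha x hx
    have hx' : x ∈ gup M.I (M.ci C).1 := (hg.ci_polar C).1 ▸ hS _ h₂ hx
    exact hx' a (hS _ h₁ ha)
  | andA_l h => exact fun a ha => (hS _ h ha).1
  | andA_r h => exact fun a ha => (hS _ h ha).2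
  | orX_l h => exact fun x hx => (hS _ h hx).1
  | orX_r h => exact fun x hx => (hS _ h hx).2
  | boxR h₁ h₂ => exact fun a ha x hx => hS _ h₁ ha x (hS _ h₂ hx)
  | diaR h₁ h₂ => exact fun a ha x hx => hS _ h₁ hx a (hS _ h₂ ha)
  | andA_inv h₁ h₂ _ => exact fun a ha => ⟨hS _ h₁ ha, hS _ h₂ ha⟩
  | orX_inv h₁ h₂ _ => exact fun x hx => ⟨hS _ h₁ hx, hS _ h₂ hx⟩
  | adj_box_l h => exact hg.satUniform_rbox_iff_rI_bdia.1 (hS _ h)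
  | adj_box_r h => exact hg.satUniform_rbox_iff_rI_boxS.1 (hS _ h)
  | adj_dia_l h => exact hg.satUniform_rdia_iff_rI_diaS.1 (hS _ h)
  | adj_dia_r h => exact hg.satUniform_rdia_iff_rI_bbox.1 (hS _ h)
  | icomp_box h => exact hg.satUniform_rbox_iff_rI_boxS.2 (hS _ h)
  | icomp_bbox h => exact hg.satUniform_rdia_iff_rI_bbox.2 (hS _ h)
  | icomp_dia h => exact hg.satUniform_rdia_iff_rI_diaS.2 (hS _ h)
  | icomp_bdia h => exact hg.satUniform_rbox_iff_rI_bdia.2 (hS _ h)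
  | @app_x b C h =>
    show M.nameExt b ⊆ (M.ci C).1
    rw [(hg.ci_polar C).2]
    exact fun a ha x hx => hS _ h a ha x hx
  | @app_a y C h =>
    show M.nameInt y ⊆ (M.ci C).2
    rw [(hg.ci_polar C).1]
    exact fun x hx a ha => hS _ h a ha x hx
  | extra he => exact he.elim

theorem Good.satUniform_of_mem_compl (hg : M.Good) {A : Set Term}
    (hA : ∀ p, Term.pos p ∈ A → M.SatUniform p) {p : PTerm}
    (hp : Term.pos p ∈ Compl noExt A) : M.SatUniform p := by
  refine hp {t | ∀ p, t = .pos p → M.SatUniform p} ⟨?_, ?_⟩ p rfl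
  · rintro _ ht p rfl
    exact hA p ht
  · rintro _ d p rfl
    exact hg.satUniform_of_deriv (S := {t | ∀ p, t = .pos p → M.SatUniform p})
      (fun q hq => hq q rfl) d

end Model

theorem pos_notMem_compl_of_neg_mem {A : Set Term} (hwf : ABoxWF A) (hcon : Consistent A)
    {p : PTerm} (hp : Term.neg p ∈ A) : Term.pos p ∉ Compl noExt A := by
  obtain ⟨M, hg, hM⟩ := hcon
  intro hK
  have hAunif : ∀ q, Term.pos q ∈ A → M.SatUniform q :=
    fun q hq => (hg.satUniform_iff_satP (hwf _ hq)).2 (hM _ hq)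
  have hplain : (Term.pos p).Plain := hwf (.neg p) hp
  exact hM _ hp ((hg.satUniform_iff_satP hplain).1 (hg.satUniform_of_mem_compl hAunif hK))

section Completion

variable {E : Term → Term → Prop}

theorem Deriv.mono {A A' S S' : Set Term} (hA : ∀ C, Occurs C A → Occurs C A') (hS : S ⊆ S')
    {t : Term} (d : Deriv E A S t) : Deriv E A' S' t := by
  cases d with
  | create_a h => exact .create_a (hA _ h)
  | create_x h => exact .create_x (hA _ h)
  | basic h₁ h₂ => exact .basic (hS h₁) (hS h₂)
  | andA_l h => exact .andA_l (hS h)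
  | andA_r h => exact .andA_r (hS h)
  | orX_l h => exact .orX_l (hS h)
  | orX_r h => exact .orX_r (hS h)
  | boxR h₁ h₂ => exact .boxR (hS h₁) (hS h₂)
  | diaR h₁ h₂ => exact .diaR (hS h₁) (hS h₂)
  | andA_inv h₁ h₂ h => exact .andA_inv (hS h₁) (hS h₂) (hA _ h)
  | orX_inv h₁ h₂ h => exact .orX_inv (hS h₁) (hS h₂) (hA _ h)
  | adj_box_l h => exact .adj_box_l (hS h)
  | adj_box_r h => exact .adj_box_r (hS h)
  | adj_dia_l h => exact .adj_dia_l (hS h)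
  | adj_dia_r h => exact .adj_dia_r (hS h)
  | icomp_box h => exact .icomp_box (hS h)
  | icomp_bbox h => exact .icomp_bbox (hS h)
  | icomp_dia h => exact .icomp_dia (hS h)
  | icomp_bdia h => exact .icomp_bdia (hS h)
  | neg_b h => exact .neg_b (hS h)
  | neg_x h => exact .neg_x (hS h)
  | app_x h => exact .app_x (hS h)
  | app_a h => exact .app_a (hS h)
  | extra he h => exact .extra he (hS h)

/-- Relational premises only ever feed the one-premise rules, which have no side conditions. -/
theorem Deriv.of_union_relational {A S N : Set Term}
    (hN : ∀ t ∈ N, ∃ p, p.IsRelational ∧ t = .pos p) {t : Term} (d : Deriv E A (S ∪ N) t) :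
    Deriv E A S t ∨ ∃ n ∈ N, Deriv E ∅ {n} t := by
  have hS : ∀ {p : PTerm}, ¬ p.IsRelational → Term.pos p ∈ S ∪ N → Term.pos p ∈ S :=
    fun hp h => h.resolve_right fun hN' => by
      obtain ⟨q, hq, he⟩ := hN _ hN'
      cases he
      exact hp hq
  have hSneg : ∀ {p : PTerm}, Term.neg p ∈ S ∪ N → Term.neg p ∈ S :=
    fun h => h.resolve_right fun hN' => by
      obtain ⟨q, -, he⟩ := hN _ hN'
      cases he
  cases d with
  | create_a h => exact .inl (.create_a h)
  | create_x h => exact .inl (.create_x h)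
  | basic h₁ h₂ => exact .inl (.basic (hS not_false h₁) (hS not_false h₂))
  | andA_l h => exact .inl (.andA_l (hS not_false h))
  | andA_r h => exact .inl (.andA_r (hS not_false h))
  | orX_l h => exact .inl (.orX_l (hS not_false h))
  | orX_r h => exact .inl (.orX_r (hS not_false h))
  | boxR h₁ h₂ => exact .inl (.boxR (hS not_false h₁) (hS not_false h₂))
  | diaR h₁ h₂ => exact .inl (.diaR (hS not_false h₁) (hS not_false h₂))
  | andA_inv h₁ h₂ h => exact .inl (.andA_inv (hS not_false h₁) (hS not_false h₂) h)
  | orX_inv h₁ h₂ h => exact .inl (.orX_inv (hS not_false h₁) (hS not_false h₂) h)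
  | adj_box_l h => exact h.imp (.adj_box_l ·) fun h => ⟨_, h, .adj_box_l rfl⟩
  | adj_box_r h => exact h.imp (.adj_box_r ·) fun h => ⟨_, h, .adj_box_r rfl⟩
  | adj_dia_l h => exact h.imp (.adj_dia_l ·) fun h => ⟨_, h, .adj_dia_l rfl⟩
  | adj_dia_r h => exact h.imp (.adj_dia_r ·) fun h => ⟨_, h, .adj_dia_r rfl⟩
  | icomp_box h => exact h.imp (.icomp_box ·) fun h => ⟨_, h, .icomp_box rfl⟩
  | icomp_bbox h => exact h.imp (.icomp_bbox ·) fun h => ⟨_, h, .icomp_bbox rfl⟩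
  | icomp_dia h => exact h.imp (.icomp_dia ·) fun h => ⟨_, h, .icomp_dia rfl⟩
  | icomp_bdia h => exact h.imp (.icomp_bdia ·) fun h => ⟨_, h, .icomp_bdia rfl⟩
  | neg_b h => exact .inl (.neg_b (hSneg h))
  | neg_x h => exact .inl (.neg_x (hSneg h))
  | app_x h => exact h.imp (.app_x ·) fun h => ⟨_, h, .app_x rfl⟩
  | app_a h => exact h.imp (.app_a ·) fun h => ⟨_, h, .app_a rfl⟩
  | extra he h => exact h.imp (.extra he ·) fun h => ⟨_, h, .extra he rfl⟩

theorem subset_compl (A : Set Term) : A ⊆ Compl E A :=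
  fun _ ht _ hS => hS.1 ht

theorem Deriv.mem_compl {A : Set Term} {t : Term} (d : Deriv E A (Compl E A) t) :
    t ∈ Compl E A :=
  fun S hS => hS.2 t (d.mono (fun _ => id) fun _ (hu : _ ∈ Compl E A) => hu S hS)

theorem Term.cpts_pos_of_isRelational {p : PTerm} (hp : p.IsRelational) :
    (Term.pos p).cpts = ∅ := by
  cases p <;> first | rfl | exact hp.elim

/-- `Deriv E ∅ {n}` are the rules with the single premise `n` and no side condition. -/
def RelClosed (E : Term → Term → Prop) (N : Set Term) : Prop :=
  (∀ t ∈ N, ∃ p, p.IsRelational ∧ t = .pos p) ∧ ∀ n ∈ N, ∀ t, Deriv E ∅ {n} t → t ∈ N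

theorem compl_insert_subset {A N : Set Term} (hN : RelClosed E N) {t₀ : Term} (ht₀ : t₀ ∈ N) :
    Compl E (insert t₀ A) ⊆ Compl E A ∪ N := by
  have hocc : ∀ C, Occurs C (insert t₀ A) → Occurs C A := by
    rintro C ⟨t, rfl | ht, hC⟩
    · obtain ⟨p, hp, rfl⟩ := hN.1 t ht₀
      simp [Term.cpts_pos_of_isRelational hp] at hC
    · exact ⟨t, ht, hC⟩
  refine fun t ht => ht _ ⟨?_, fun t d => ?_⟩
  · rintro t (rfl | ht)
    exacts [.inr ht₀, .inl (subset_compl A ht)]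
  · rcases d.of_union_relational hN.1 with d | ⟨n, hn, d⟩
    exacts [.inl (d.mono hocc subset_rfl).mem_compl, .inr (hN.2 n hn t d)]

end Completion

section GeneratedNames

variable {n : ℕ}

@[simp] theorem FtName.boxS_eq_box_base {y : FtName} :
    y.boxS = .box (.base n) ↔ y = .base n := by
  cases y <;> simp [FtName.boxS]

@[simp] theorem ObName.diaS_eq_dia_base {b : ObName} :
    b.diaS = .dia (.base n) ↔ b = .base n := by
  cases b <;> simp [ObName.diaS]

@[simp] theorem FtName.boxS_ne_base (y : FtName) : y.boxS ≠ .base n := by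
  cases y <;> simp [FtName.boxS]

@[simp] theorem ObName.diaS_ne_base (b : ObName) : b.diaS ≠ .base n := by
  cases b <;> simp [ObName.diaS]

@[simp] theorem FtName.boxS_ne_bbox (y z : FtName) : y.boxS ≠ .bbox z := by
  cases y <;> simp [FtName.boxS]

@[simp] theorem ObName.diaS_ne_bdia (b c : ObName) : b.diaS ≠ .bdia c := by
  cases b <;> simp [ObName.diaS]

end GeneratedNames

theorem relClosed_rI_base (m n : ℕ) :
    RelClosed noExt {.pos (.rI (.base m) (.base n))} := by
  refine ⟨by simp [PTerm.IsRelational], ?_⟩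
  rintro _ rfl t d
  cases d <;> simp_all [Occurs, noExt]

theorem relClosed_rbox_base (m n : ℕ) :
    RelClosed noExt {.pos (.rbox (.base m) (.base n)), .pos (.rI (.bdia (.base m)) (.base n)),
      .pos (.rI (.base m) (.box (.base n)))} := by
  refine ⟨by simp [PTerm.IsRelational], ?_⟩
  rintro _ (rfl | rfl | rfl) t d <;> cases d <;> simp_all [Occurs, noExt]

theorem relClosed_rdia_base (m n : ℕ) :
    RelClosed noExt {.pos (.rdia (.base n) (.base m)), .pos (.rI (.dia (.base m)) (.base n)),
      .pos (.rI (.base m) (.bbox (.base n)))} := by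
  refine ⟨by simp [PTerm.IsRelational], ?_⟩
  rintro _ (rfl | rfl | rfl) t d <;> cases d <;> simp_all [Occurs, noExt]

theorem Cpt.mem_subs_self (C : Cpt) : C ∈ C.subs := by
  cases C <;> simp [Cpt.subs]

theorem Cpt.subs_subset_of_mem {C D : Cpt} (h : D ∈ C.subs) : D.subs ⊆ C.subs := by
  induction C with
  | atom n => simp_all [Cpt.subs]
  | meet C₁ C₂ ih₁ ih₂ | join C₁ C₂ ih₁ ih₂ =>
    simp only [Cpt.subs, Finset.mem_insert, Finset.mem_union] at h
    rcases h with rfl | h | h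
    · exact subset_rfl
    · exact (ih₁ h).trans fun _ hx => by simp [Cpt.subs, hx]
    · exact (ih₂ h).trans fun _ hx => by simp [Cpt.subs, hx]
  | box C ih | dia C ih =>
    simp only [Cpt.subs, Finset.mem_insert] at h
    rcases h with rfl | h
    · exact subset_rfl
    · exact (ih h).trans fun _ hx => by simp [Cpt.subs, hx]

theorem Occurs.of_mem_subs {A : Set Term} {C D : Cpt} (hC : Occurs C A) (hD : D ∈ C.subs) :
    Occurs D A := by
  obtain ⟨t, ht, hCt⟩ := hC
  refine ⟨t, ht, ?_⟩
  rcases t with (_ | _ | _ | _ | _) | (_ | _ | _ | _ | _) <;>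
    simp only [Term.cpts, Finset.notMem_empty] at hCt ⊢ <;> exact Cpt.subs_subset_of_mem hCt hD

section CanonicalNames

variable {A : Set Term} {b : ObName} {y : FtName} {C : Cpt}

theorem rbox_mem_compl_iff_rI_boxS :
    Term.pos (.rbox b y) ∈ Compl noExt A ↔ Term.pos (.rI b y.boxS) ∈ Compl noExt A :=
  ⟨fun h => (Deriv.adj_box_r h).mem_compl, fun h => (Deriv.icomp_box h).mem_compl⟩

theorem rbox_mem_compl_iff_rI_bdia :
    Term.pos (.rbox b y) ∈ Compl noExt A ↔ Term.pos (.rI b.bdia y) ∈ Compl noExt A :=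
  ⟨fun h => (Deriv.adj_box_l h).mem_compl, fun h => (Deriv.icomp_bdia h).mem_compl⟩

theorem rdia_mem_compl_iff_rI_diaS :
    Term.pos (.rdia y b) ∈ Compl noExt A ↔ Term.pos (.rI b.diaS y) ∈ Compl noExt A :=
  ⟨fun h => (Deriv.adj_dia_l h).mem_compl, fun h => (Deriv.icomp_dia h).mem_compl⟩

theorem rdia_mem_compl_iff_rI_bbox :
    Term.pos (.rdia y b) ∈ Compl noExt A ↔ Term.pos (.rI b y.bbox) ∈ Compl noExt A :=
  ⟨fun h => (Deriv.adj_dia_r h).mem_compl, fun h => (Deriv.icomp_bbox h).mem_compl⟩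

theorem mem_compl_atom_iff {n : ℕ} (hC : Occurs (.atom n) A) :
    Term.pos (.mem b (.atom n)) ∈ Compl noExt A ↔
      Term.pos (.rI b (.cls (.atom n))) ∈ Compl noExt A :=
  ⟨fun h => (Deriv.basic h (Deriv.create_x hC).mem_compl).mem_compl,
    fun h => (Deriv.app_x h).mem_compl⟩

/-- The classifying feature `x_C` witnesses the nontrivial direction. -/
theorem mem_compl_iff_forall_rI (hC : Occurs C A) :
    Term.pos (.mem b C) ∈ Compl noExt A ↔
      ∀ y, Term.pos (.fmem y C) ∈ Compl noExt A → Term.pos (.rI b y) ∈ Compl noExt A :=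
  ⟨fun h _ hy => (Deriv.basic h hy).mem_compl,
    fun h => (Deriv.app_x (h _ (Deriv.create_x hC).mem_compl)).mem_compl⟩

theorem fmem_compl_iff_forall_rI (hC : Occurs C A) :
    Term.pos (.fmem y C) ∈ Compl noExt A ↔
      ∀ b, Term.pos (.mem b C) ∈ Compl noExt A → Term.pos (.rI b y) ∈ Compl noExt A :=
  ⟨fun h _ hb => (Deriv.basic hb h).mem_compl,
    fun h => (Deriv.app_a (h _ (Deriv.create_a hC).mem_compl)).mem_compl⟩

theorem mem_compl_meet_iff {C₁ C₂ : Cpt} (hC : Occurs (.meet C₁ C₂) A) :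
    Term.pos (.mem b (.meet C₁ C₂)) ∈ Compl noExt A ↔
      Term.pos (.mem b C₁) ∈ Compl noExt A ∧ Term.pos (.mem b C₂) ∈ Compl noExt A :=
  ⟨fun h => ⟨(Deriv.andA_l h).mem_compl, (Deriv.andA_r h).mem_compl⟩,
    fun h => (Deriv.andA_inv h.1 h.2 hC).mem_compl⟩

theorem fmem_compl_join_iff {C₁ C₂ : Cpt} (hC : Occurs (.join C₁ C₂) A) :
    Term.pos (.fmem y (.join C₁ C₂)) ∈ Compl noExt A ↔
      Term.pos (.fmem y C₁) ∈ Compl noExt A ∧ Term.pos (.fmem y C₂) ∈ Compl noExt A :=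
  ⟨fun h => ⟨(Deriv.orX_l h).mem_compl, (Deriv.orX_r h).mem_compl⟩,
    fun h => (Deriv.orX_inv h.1 h.2 hC).mem_compl⟩

theorem mem_compl_box_iff (hC : Occurs C A) :
    Term.pos (.mem b (.box C)) ∈ Compl noExt A ↔
      ∀ y, Term.pos (.fmem y C) ∈ Compl noExt A → Term.pos (.rbox b y) ∈ Compl noExt A := by
  refine ⟨fun h _ hy => (Deriv.boxR h hy).mem_compl, fun h => ?_⟩
  have hbox : Term.pos (.rI b (FtName.cls C).boxS) ∈ Compl noExt A :=
    rbox_mem_compl_iff_rI_boxS.1 (h _ (Deriv.create_x hC).mem_compl)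
  exact (Deriv.app_x hbox).mem_compl

theorem fmem_compl_dia_iff (hC : Occurs C A) :
    Term.pos (.fmem y (.dia C)) ∈ Compl noExt A ↔
      ∀ b, Term.pos (.mem b C) ∈ Compl noExt A → Term.pos (.rdia y b) ∈ Compl noExt A := by
  refine ⟨fun h _ hb => (Deriv.diaR h hb).mem_compl, fun h => ?_⟩
  have hdia : Term.pos (.rI (ObName.cls C).diaS y) ∈ Compl noExt A :=
    rdia_mem_compl_iff_rI_diaS.1 (h _ (Deriv.create_a hC).mem_compl)
  exact (Deriv.app_a hdia).mem_compl

end CanonicalNames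

section Canonical

variable {B : Finset Term} {b : ObName} {y : FtName}

theorem canModel_oi (h : ObOccurs b (Compl noExt ↑B)) : (canModel B).oi b = some ⟨b, h⟩ :=
  dif_pos h

theorem canModel_fi (h : FtOccurs y (Compl noExt ↑B)) : (canModel B).fi y = some ⟨y, h⟩ :=
  dif_pos h

theorem canModel_oi_of_not_obOccurs (h : ¬ ObOccurs b (Compl noExt ↑B)) :
    (canModel B).oi b = none :=
  dif_neg h

theorem canModel_fi_of_not_ftOccurs (h : ¬ FtOccurs y (Compl noExt ↑B)) :
    (canModel B).fi y = none :=
  dif_neg h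

@[simp] theorem canModel_I_none_left (x : (canModel B).Ft) : ¬ (canModel B).I none x := by
  simp [canModel]

@[simp] theorem canModel_I_none_right (o : (canModel B).Ob) : ¬ (canModel B).I o none := by
  simp [canModel]

@[simp] theorem canModel_Rb_none_left (x : (canModel B).Ft) : ¬ (canModel B).Rb none x := by
  simp [canModel]

@[simp] theorem canModel_Rb_none_right (o : (canModel B).Ob) : ¬ (canModel B).Rb o none := by
  simp [canModel]

@[simp] theorem canModel_Rd_none_left (o : (canModel B).Ob) : ¬ (canModel B).Rd none o := by
  simp [canModel]

@[simp] theorem canModel_Rd_none_right (x : (canModel B).Ft) : ¬ (canModel B).Rd x none := by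
  simp [canModel]

theorem canModel_none_notMem_vA (n : ℕ) : none ∉ (canModel B).vA n :=
  fun ⟨_, h, _⟩ => nomatch h

theorem canModel_oi_eq_some {b' : {b // ObOccurs b (Compl noExt ↑B)}} :
    (canModel B).oi b = some b' ↔ b'.1 = b := by
  by_cases hb : ObOccurs b (Compl noExt ↑B)
  · rw [canModel_oi hb]
    obtain ⟨b', hb'⟩ := b'
    exact ⟨by rintro ⟨⟩; rfl, by rintro rfl; rfl⟩
  · simp only [canModel_oi_of_not_obOccurs hb, reduceCtorEq, false_iff]
    exact fun h => hb (h ▸ b'.2)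

theorem canModel_fi_eq_some {y' : {y // FtOccurs y (Compl noExt ↑B)}} :
    (canModel B).fi y = some y' ↔ y'.1 = y := by
  by_cases hy : FtOccurs y (Compl noExt ↑B)
  · rw [canModel_fi hy]
    obtain ⟨y', hy'⟩ := y'
    exact ⟨by rintro ⟨⟩; rfl, by rintro rfl; rfl⟩
  · simp only [canModel_fi_of_not_ftOccurs hy, reduceCtorEq, false_iff]
    exact fun h => hy (h ▸ y'.2)

@[simp] theorem canModel_I_oi_fi :
    (canModel B).I ((canModel B).oi b) ((canModel B).fi y) ↔
      Term.pos (.rI b y) ∈ Compl noExt ↑B := by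
  refine ⟨fun ⟨b', y', hb, hy, h⟩ => ?_, fun h => ?_⟩
  · rwa [canModel_oi_eq_some.1 hb, canModel_fi_eq_some.1 hy] at h
  · exact ⟨⟨b, _, h, by simp [Term.objs, PTerm.objs]⟩,
      ⟨y, _, h, by simp [Term.feats, PTerm.feats]⟩, canModel_oi _, canModel_fi _, h⟩

@[simp] theorem canModel_Rb_oi_fi :
    (canModel B).Rb ((canModel B).oi b) ((canModel B).fi y) ↔
      Term.pos (.rbox b y) ∈ Compl noExt ↑B := by
  refine ⟨fun ⟨b', y', hb, hy, h⟩ => ?_, fun h => ?_⟩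
  · rwa [canModel_oi_eq_some.1 hb, canModel_fi_eq_some.1 hy] at h
  · exact ⟨⟨b, _, h, by simp [Term.objs, PTerm.objs]⟩,
      ⟨y, _, h, by simp [Term.feats, PTerm.feats]⟩, canModel_oi _, canModel_fi _, h⟩

@[simp] theorem canModel_Rd_fi_oi :
    (canModel B).Rd ((canModel B).fi y) ((canModel B).oi b) ↔
      Term.pos (.rdia y b) ∈ Compl noExt ↑B := by
  refine ⟨fun ⟨b', y', hb, hy, h⟩ => ?_, fun h => ?_⟩
  · rwa [canModel_oi_eq_some.1 hb, canModel_fi_eq_some.1 hy] at h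
  · exact ⟨⟨b, _, h, by simp [Term.objs, PTerm.objs]⟩,
      ⟨y, _, h, by simp [Term.feats, PTerm.feats]⟩, canModel_oi _, canModel_fi _, h⟩

@[simp] theorem canModel_oi_mem_vA {n : ℕ} :
    (canModel B).oi b ∈ (canModel B).vA n ↔
      Term.pos (.rI b (.cls (.atom n))) ∈ Compl noExt ↑B := by
  refine ⟨fun ⟨b', hb, h⟩ => ?_, fun h => ⟨⟨b, _, h, by simp [Term.objs, PTerm.objs]⟩,
    canModel_oi _, h⟩⟩
  rwa [canModel_oi_eq_some.1 hb] at h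

theorem canModel_forall_ob {P : (canModel B).Ob → Prop} :
    (∀ o, P o) ↔ P none ∧ ∀ b, P ((canModel B).oi b) := by
  refine ⟨fun h => ⟨h _, fun _ => h _⟩, fun h o => ?_⟩
  rcases o with _ | ⟨b, hb⟩
  exacts [h.1, canModel_oi hb ▸ h.2 b]

theorem canModel_forall_ft {P : (canModel B).Ft → Prop} :
    (∀ x, P x) ↔ P none ∧ ∀ y, P ((canModel B).fi y) := by
  refine ⟨fun h => ⟨h _, fun _ => h _⟩, fun h x => ?_⟩
  rcases x with _ | ⟨y, hy⟩
  exacts [h.1, canModel_fi hy ▸ h.2 y]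

theorem canModel_good (B : Finset Term) : (canModel B).Good := by
  refine ⟨fun x => ?_, fun o => ?_, fun o => ?_, fun x => ?_, fun n => ?_⟩
  · rw [stableO_iff_isExtent]
    revert x
    refine canModel_forall_ft.2 ⟨isExtent_of_forall_iff (x := none) (by simp), fun y => ?_⟩
    exact isExtent_of_forall_iff (x := (canModel B).fi y.boxS)
      (canModel_forall_ob.2 ⟨by simp, fun b => by simp [rbox_mem_compl_iff_rI_boxS]⟩)
  · rw [stableF_iff_isIntent]
    revert o
    refine canModel_forall_ob.2 ⟨isIntent_of_forall_iff (a := none) (by simp), fun b => ?_⟩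
    exact isIntent_of_forall_iff (a := (canModel B).oi b.bdia)
      (canModel_forall_ft.2 ⟨by simp, fun y => by simp [rbox_mem_compl_iff_rI_bdia]⟩)
  · rw [stableF_iff_isIntent]
    revert o
    refine canModel_forall_ob.2 ⟨isIntent_of_forall_iff (a := none) (by simp), fun b => ?_⟩
    exact isIntent_of_forall_iff (a := (canModel B).oi b.diaS)
      (canModel_forall_ft.2 ⟨by simp, fun y => by simp [rdia_mem_compl_iff_rI_diaS]⟩)
  · rw [stableO_iff_isExtent]
    revert x
    refine canModel_forall_ft.2 ⟨isExtent_of_forall_iff (x := none) (by simp), fun y => ?_⟩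
    exact isExtent_of_forall_iff (x := (canModel B).fi y.bbox)
      (canModel_forall_ob.2 ⟨by simp, fun b => by simp [rdia_mem_compl_iff_rI_bbox]⟩)
  · rw [stableO_iff_isExtent]
    exact isExtent_of_forall_iff (P := (· ∈ (canModel B).vA n))
      (x := (canModel B).fi (.cls (.atom n))) (canModel_forall_ob.2
        ⟨iff_of_false (canModel_none_notMem_vA n) (canModel_I_none_left _), fun b => by simp⟩)

def CanExtent (B : Finset Term) (C : Cpt) (X : Set (canModel B).Ob) : Prop :=
  none ∉ X ∧ ∀ b, (canModel B).oi b ∈ X ↔ Term.pos (.mem b C) ∈ Compl noExt ↑B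

def CanIntent (B : Finset Term) (C : Cpt) (Y : Set (canModel B).Ft) : Prop :=
  none ∉ Y ∧ ∀ y, (canModel B).fi y ∈ Y ↔ Term.pos (.fmem y C) ∈ Compl noExt ↑B

variable {C : Cpt} {X : Set (canModel B).Ob} {Y : Set (canModel B).Ft}

theorem CanExtent.forall_mem_iff (hX : CanExtent B C X) {P : (canModel B).Ob → Prop} :
    (∀ o ∈ X, P o) ↔ ∀ b, Term.pos (.mem b C) ∈ Compl noExt ↑B → P ((canModel B).oi b) := by
  rw [canModel_forall_ob]
  exact ⟨fun h b hb => h.2 b ((hX.2 b).2 hb),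
    fun h => ⟨fun hn => (hX.1 hn).elim, fun b hb => h b ((hX.2 b).1 hb)⟩⟩

theorem CanIntent.forall_mem_iff (hY : CanIntent B C Y) {P : (canModel B).Ft → Prop} :
    (∀ x ∈ Y, P x) ↔ ∀ y, Term.pos (.fmem y C) ∈ Compl noExt ↑B → P ((canModel B).fi y) := by
  rw [canModel_forall_ft]
  exact ⟨fun h y hy => h.2 y ((hY.2 y).2 hy),
    fun h => ⟨fun hn => (hY.1 hn).elim, fun y hy => h y ((hY.2 y).1 hy)⟩⟩

theorem CanExtent.canIntent_gup (hC : Occurs C ↑B) (hX : CanExtent B C X) :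
    CanIntent B C (gup (canModel B).I X) := by
  refine ⟨fun h => ?_, fun y => ?_⟩
  · exact canModel_I_none_right _ (h _ ((hX.2 _).2 (Deriv.create_a hC).mem_compl))
  · simp only [gup, Set.mem_ofPred_eq, hX.forall_mem_iff, canModel_I_oi_fi]
    exact (fmem_compl_iff_forall_rI hC).symm

theorem CanIntent.canExtent_gdn (hC : Occurs C ↑B) (hY : CanIntent B C Y) :
    CanExtent B C (gdn (canModel B).I Y) := by
  refine ⟨fun h => ?_, fun b => ?_⟩
  · exact canModel_I_none_left _ (h _ ((hY.2 _).2 (Deriv.create_x hC).mem_compl))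
  · simp only [gdn, Set.mem_ofPred_eq, hY.forall_mem_iff, canModel_I_oi_fi]
    exact (mem_compl_iff_forall_rI hC).symm

theorem canModel_ci (hC : Occurs C ↑B) :
    CanExtent B C ((canModel B).ci C).1 ∧ CanIntent B C ((canModel B).ci C).2 := by
  induction C with
  | atom n =>
    have hE : CanExtent B (.atom n) ((canModel B).vA n) :=
      ⟨canModel_none_notMem_vA n, fun b => by simp [mem_compl_atom_iff hC]⟩
    exact ⟨hE, hE.canIntent_gup hC⟩
  | meet C₁ C₂ ih₁ ih₂ =>
    obtain ⟨⟨hnone₁, h₁⟩, -⟩ := ih₁ (hC.of_mem_subs (by simp [Cpt.subs, Cpt.mem_subs_self]))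
    obtain ⟨⟨-, h₂⟩, -⟩ := ih₂ (hC.of_mem_subs (by simp [Cpt.subs, Cpt.mem_subs_self]))
    have hE : CanExtent B (.meet C₁ C₂) (((canModel B).ci C₁).1 ∩ ((canModel B).ci C₂).1) :=
      ⟨fun h => hnone₁ h.1, fun b => by simp [h₁, h₂, mem_compl_meet_iff hC]⟩
    exact ⟨hE, hE.canIntent_gup hC⟩
  | join C₁ C₂ ih₁ ih₂ =>
    obtain ⟨-, hnone₁, h₁⟩ := ih₁ (hC.of_mem_subs (by simp [Cpt.subs, Cpt.mem_subs_self]))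
    obtain ⟨-, -, h₂⟩ := ih₂ (hC.of_mem_subs (by simp [Cpt.subs, Cpt.mem_subs_self]))
    have hI : CanIntent B (.join C₁ C₂) (((canModel B).ci C₁).2 ∩ ((canModel B).ci C₂).2) :=
      ⟨fun h => hnone₁ h.1, fun y => by simp [h₁, h₂, fmem_compl_join_iff hC]⟩
    exact ⟨hI.canExtent_gdn hC, hI⟩
  | box C ih =>
    have hC' : Occurs C ↑B := hC.of_mem_subs (by simp [Cpt.subs, Cpt.mem_subs_self])
    obtain ⟨-, hI⟩ := ih hC'
    have hE : CanExtent B (.box C) (gdn (canModel B).Rb ((canModel B).ci C).2) := by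
      refine ⟨fun h => ?_, fun b => ?_⟩
      · exact canModel_Rb_none_left _ (h _ ((hI.2 _).2 (Deriv.create_x hC').mem_compl))
      · simp only [gdn, Set.mem_ofPred_eq, hI.forall_mem_iff, canModel_Rb_oi_fi]
        exact (mem_compl_box_iff hC').symm
    exact ⟨hE, hE.canIntent_gup hC⟩
  | dia C ih =>
    have hC' : Occurs C ↑B := hC.of_mem_subs (by simp [Cpt.subs, Cpt.mem_subs_self])
    obtain ⟨hE, -⟩ := ih hC'
    have hI : CanIntent B (.dia C)
        (gup (fun a x => (canModel B).Rd x a) ((canModel B).ci C).1) := by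
      refine ⟨fun h => ?_, fun y => ?_⟩
      · exact canModel_Rd_none_left _ (h _ ((hE.2 _).2 (Deriv.create_a hC').mem_compl))
      · simp only [gup, Set.mem_ofPred_eq, hE.forall_mem_iff, canModel_Rd_fi_oi]
        exact (fmem_compl_dia_iff hC').symm
    exact ⟨hI.canExtent_gdn hC, hI⟩

theorem canModel_satP_iff {p : PTerm} (hp : Term.pos p ∈ B ∨ Term.neg p ∈ B) :
    (canModel B).SatP p ↔ Term.pos p ∈ Compl noExt ↑B := by
  cases p with
  | rI b y => exact canModel_I_oi_fi
  | rbox b y => exact canModel_Rb_oi_fi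
  | rdia y b => exact canModel_Rd_fi_oi
  | mem b C =>
    have hC : Occurs C ↑B := hp.elim (⟨_, ·, C.mem_subs_self⟩) (⟨_, ·, C.mem_subs_self⟩)
    exact (canModel_ci hC).1.2 b
  | fmem y C =>
    have hC : Occurs C ↑B := hp.elim (⟨_, ·, C.mem_subs_self⟩) (⟨_, ·, C.mem_subs_self⟩)
    exact (canModel_ci hC).2.2 y

theorem canModel_satAll (hneg : ∀ p, Term.neg p ∈ B → Term.pos p ∉ Compl noExt ↑B) :
    (canModel B).SatAll ↑B := by
  rintro (p | p) ht
  · exact (canModel_satP_iff (.inl ht)).2 (subset_compl _ ht)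
  · exact fun h => hneg p ht ((canModel_satP_iff (.inr ht)).1 h)

end Canonical

theorem entails_neg_iff_of_relClosed {A : Finset Term} (hwf : ABoxWF ↑A) (hcon : Consistent ↑A)
    {β : PTerm} {N : Set Term} (hN : RelClosed noExt N) (hβ : Term.pos β ∈ N)
    (hplain : ∀ t ∈ N, t.Plain → t = .pos β) :
    Entails ↑A (.neg β) ↔ Term.neg β ∈ A := by
  refine ⟨fun hent => ?_, fun hβA _ _ hM => hM _ hβA⟩
  by_contra hβA
  have hneg : ∀ p, Term.neg p ∈ insert (.pos β) A →
      Term.pos p ∉ Compl noExt ↑(insert (.pos β) A) := by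
    intro p hp hK
    have hpA : Term.neg p ∈ A := by simpa using hp
    rw [Finset.coe_insert] at hK
    rcases compl_insert_subset hN hβ hK with hK | hK
    · exact pos_notMem_compl_of_neg_mem hwf hcon hpA hK
    · obtain rfl : p = β := Term.pos.inj (hplain _ hK (hwf (.neg p) hpA))
      exact hβA hpA
  have hsat := canModel_satAll hneg
  exact hent _ (canModel_good _) (fun t ht => hsat t (by simp [ht])) (hsat (.pos β) (by simp))

/-- For any consistent LE-ALC ABox `A` and any individual
names `b`, `y` occurring in `A`:
(1) `A ⊨ ¬(b I y)` iff `¬(b I y) ∈ A`;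
(2) `A ⊨ ¬(b R_□ y)` iff `¬(b R_□ y) ∈ A`;
(3) `A ⊨ ¬(y R_◇ b)` iff `¬(y R_◇ b) ∈ A`. -/
theorem negative_relational_queries (A : Finset Term) (hwf : ABoxWF ↑A)
    (hcon : Consistent ↑A) (b : ObName) (y : FtName)
    (hb : ObOccurs b ↑A) (hy : FtOccurs y ↑A) :
    (Entails ↑A (.neg (.rI b y)) ↔ Term.neg (.rI b y) ∈ A) ∧
    (Entails ↑A (.neg (.rbox b y)) ↔ Term.neg (.rbox b y) ∈ A) ∧
    (Entails ↑A (.neg (.rdia y b)) ↔ Term.neg (.rdia y b) ∈ A) := by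
  obtain ⟨m, rfl⟩ : b.IsBase := let ⟨t, ht, hbt⟩ := hb; (hwf t ht).1 b hbt
  obtain ⟨n, rfl⟩ : y.IsBase := let ⟨t, ht, hyt⟩ := hy; (hwf t ht).2 y hyt
  refine ⟨entails_neg_iff_of_relClosed hwf hcon (relClosed_rI_base m n) rfl ?_,
    entails_neg_iff_of_relClosed hwf hcon (relClosed_rbox_base m n) (by simp) ?_,
    entails_neg_iff_of_relClosed hwf hcon (relClosed_rdia_base m n) (by simp) ?_⟩ <;>
  · rintro t ht ⟨hobj, hft⟩
    simp only [Set.mem_insert_iff, Set.mem_singleton_iff] at ht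
    rcases ht with rfl | rfl | rfl <;>
      simp_all [Term.objs, Term.feats, PTerm.objs, PTerm.feats, ObName.IsBase, FtName.IsBase]

end LEALC
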